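/- The 2-sequences a, b : ℕ² → ℚ defined by a(m,n) = binomial(m+n, n) (so that H_a = 1/(1−s−t)) and b(m,n) = 1 if m = n and 0 otherwise (so that H_b = 1/(1−s·t)) are both rational, but their Hadamard product ab : (m,n) ↦ a(m,n)·b(m,n), whose Hilbert series is Σ_{n≥0} binomial(2n,n)·sⁿtⁿ, is not rational: there exist no polynomials P, Q ∈ ℚ[s,t] with Q having nonzero constant term such that H_{ab}·Q = P in ℚ[[s,t]]. -/

import Mathlib

/-- The Hilbert series of an `r`-sequence `a : ℕʳ → K`, i.e. the multivariate formal
power series `Σ_{n ∈ ℕʳ} a(n)·t₁^{n₁}⋯t_r^{n_r}`. -/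
def hilbertSeries {K : Type*} [Field K] {r : ℕ} (a : (Fin r → ℕ) → K) :
    MvPowerSeries (Fin r) K :=
  fun d => a d

/-- An `r`-sequence is rational if there are polynomials `P, Q ∈ K[t₁,…,t_r]` with `Q`
having nonzero constant term such that `H_a · Q = P` in `K[[t₁,…,t_r]]`. -/
def IsRationalMSeq {K : Type*} [Field K] {r : ℕ} (a : (Fin r → ℕ) → K) : Prop :=
  ∃ P Q : MvPolynomial (Fin r) K, MvPolynomial.coeff 0 Q ≠ 0 ∧
    hilbertSeries a * (Q : MvPowerSeries (Fin r) K) = (P : MvPowerSeries (Fin r) K)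

/-- The 2-sequence `a(m,n) = binomial (m+n) n` over `ℚ`. -/
def binomSeq : (Fin 2 → ℕ) → ℚ := fun n => ((n 0 + n 1).choose (n 1) : ℚ)

/-- The 2-sequence `b(m,n) = 1` if `m = n` and `0` otherwise, over `ℚ`. -/
def diagSeq : (Fin 2 → ℕ) → ℚ := fun n => if n 0 = n 1 then 1 else 0

/-! The diagonal `f = Σ C(2n,n) xⁿ` of the Hadamard product satisfies `(1 - 4x) f' = 2f`, hence
`(1 - 4x) f² = 1`. As the Hadamard product is supported on the diagonal, taking diagonals turns
`H · Q = P` into `f · q = p` for polynomials `p, q` with `q(0) ≠ 0`. Then `q² = (1 - 4x) p²`, whose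
two sides have degrees of different parity. -/

open scoped PowerSeries

theorem Polynomial.eq_zero_of_mul_self_eq_mul_mul_self {R : Type*} [CommRing R] [IsDomain R]
    {p q r : Polynomial R} (hr : Odd r.natDegree) (h : q * q = r * (p * p)) : q = 0 := by
  by_contra hq
  have hp : p ≠ 0 := by rintro rfl; simp_all
  have hr0 : r ≠ 0 := by rintro rfl; simp at hr
  have := congrArg Polynomial.natDegree h
  rw [Polynomial.natDegree_mul hq hq, Polynomial.natDegree_mul hr0 (mul_ne_zero hp hp),
    Polynomial.natDegree_mul hp hp] at this
  obtain ⟨k, hk⟩ := hr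
  omega

noncomputable def centralBinomSeries (R : Type*) [CommRing R] : R⟦X⟧ :=
  PowerSeries.mk fun n => (n.centralBinom : R)

section CentralBinom

open PowerSeries
variable {R : Type*} [CommRing R]

theorem coeff_centralBinomSeries (n : ℕ) : coeff n (centralBinomSeries R) = n.centralBinom :=
  coeff_mk _ _

theorem one_sub_four_X_mul_derivative_centralBinomSeries :
    (1 - 4 * X) * d⁄dX R (centralBinomSeries R) = 2 * centralBinomSeries R := by
  ext n
  rw [sub_mul, one_mul, map_sub, mul_assoc, ← map_ofNat C 4, ← map_ofNat C 2, coeff_C_mul,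
    coeff_C_mul, coeff_derivative]
  rcases n with _ | n
  · simp [coeff_centralBinomSeries, Nat.centralBinom]
  · rw [coeff_succ_X_mul, coeff_derivative]
    simp only [coeff_centralBinomSeries]
    have := congrArg (Nat.cast : ℕ → R) (Nat.succ_mul_centralBinom_succ (n + 1))
    push_cast at this ⊢
    linear_combination this

theorem one_sub_four_X_mul_centralBinomSeries_sq [IsAddTorsionFree R] :
    (1 - 4 * X) * centralBinomSeries R ^ 2 = 1 := by
  refine derivative.ext ?_ (by simp [centralBinomSeries])
  have h4 : d⁄dX R (4 : R⟦X⟧) = 0 := by rw [← map_ofNat C 4]; exact derivative_C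
  simp only [Derivation.leibniz, derivative_pow, map_sub, smul_eq_mul, derivative_X, h4,
    derivative_one]
  linear_combination
    (2 * centralBinomSeries R) * one_sub_four_X_mul_derivative_centralBinomSeries (R := R)

theorem eq_zero_of_centralBinomSeries_mul_eq_coe {K : Type*} [Field K] [CharZero K]
    {p q : Polynomial K} (h : centralBinomSeries K * q = p) : q = 0 := by
  refine Polynomial.eq_zero_of_mul_self_eq_mul_mul_self
    (r := Polynomial.C (-4) * Polynomial.X + Polynomial.C 1) (p := p) ?_ (Polynomial.coe_inj.mp ?_)
  · rw [Polynomial.natDegree_linear (by simp)]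
    exact odd_one
  · have hr : ((Polynomial.C (-4) * Polynomial.X + Polynomial.C 1 : Polynomial K) : K⟦X⟧)
        = 1 - 4 * X := by
      rw [Polynomial.coe_add, Polynomial.coe_mul, Polynomial.coe_C, Polynomial.coe_C,
        Polynomial.coe_X, map_neg, map_ofNat C 4, map_one]
      ring
    push_cast [hr]
    calc (q * q : K⟦X⟧) = (1 - 4 * X) * centralBinomSeries K ^ 2 * (q * q : K⟦X⟧) := by
          rw [one_sub_four_X_mul_centralBinomSeries_sq, one_mul]
      _ = (1 - 4 * X) * (p * p : K⟦X⟧) := by rw [← h]; ring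

end CentralBinom

namespace MvPowerSeries

variable {σ R : Type*} [Finite σ]

noncomputable def diagonalExp (n : ℕ) : σ →₀ ℕ := Finsupp.equivFunOnFinite.symm fun _ => n

@[simp] theorem diagonalExp_apply (n : ℕ) (i : σ) : diagonalExp n i = n := rfl

@[simp] theorem diagonalExp_zero : (diagonalExp 0 : σ →₀ ℕ) = 0 := by ext; simp

theorem diagonalExp_add (m n : ℕ) :
    (diagonalExp (m + n) : σ →₀ ℕ) = diagonalExp m + diagonalExp n := by ext; simp

theorem diagonalExp_sub (m n : ℕ) :
    (diagonalExp (m - n) : σ →₀ ℕ) = diagonalExp m - diagonalExp n := by ext; simp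

theorem diagonalExp_injective [Nonempty σ] : Function.Injective (diagonalExp : ℕ → σ →₀ ℕ) :=
  fun m n h => by simpa using DFunLike.congr_fun h (Classical.arbitrary σ)

variable [CommSemiring R]

noncomputable def diagonal (F : MvPowerSeries σ R) : R⟦X⟧ :=
  PowerSeries.mk fun n => coeff (diagonalExp n) F

theorem coeff_diagonal (F : MvPowerSeries σ R) (n : ℕ) :
    PowerSeries.coeff n (diagonal F) = coeff (diagonalExp n) F :=
  PowerSeries.coeff_mk _ _

theorem diagonal_mul [Nonempty σ] {F : MvPowerSeries σ R}
    (hF : ∀ d ∉ Set.range diagonalExp, coeff d F = 0) (G : MvPowerSeries σ R) :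
    diagonal (F * G) = diagonal F * diagonal G := by
  classical
  ext n
  rw [coeff_diagonal, coeff_mul, PowerSeries.coeff_mul, eq_comm]
  refine Finset.sum_of_injOn (Prod.map diagonalExp diagonalExp)
    (diagonalExp_injective.prodMap diagonalExp_injective).injOn ?_ ?_ ?_
  · intro ij hij
    simp only [Finset.mem_coe, Finset.HasAntidiagonal.mem_antidiagonal] at hij ⊢
    rw [← hij, diagonalExp_add]
    rfl
  · rintro ⟨a, b⟩ hab hnot
    simp only [Finset.HasAntidiagonal.mem_antidiagonal] at hab
    by_cases ha : a ∈ Set.range diagonalExp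
    · obtain ⟨k, rfl⟩ := ha
      refine absurd ⟨(k, n - k), ?_, ?_⟩ hnot
      · have := DFunLike.congr_fun hab (Classical.arbitrary σ)
        simp only [Finsupp.add_apply, diagonalExp_apply] at this
        simp only [Finset.mem_coe, Finset.HasAntidiagonal.mem_antidiagonal]
        omega
      · simp [diagonalExp_sub, ← hab]
    · simp [hF a ha]
  · intro ij _
    simp [coeff_diagonal]

end MvPowerSeries

theorem MvPolynomial.exists_coe_eq_diagonal {σ R : Type*} [Finite σ] [Nonempty σ]
    [CommSemiring R] (Q : MvPolynomial σ R) :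
    ∃ q : Polynomial R, (q : R⟦X⟧) = MvPowerSeries.diagonal (Q : MvPowerSeries σ R) := by
  refine ⟨PowerSeries.trunc (Q.totalDegree + 1) (MvPowerSeries.diagonal (Q : MvPowerSeries σ R)),
    ?_⟩
  ext n
  rw [Polynomial.coeff_coe, PowerSeries.coeff_trunc, MvPowerSeries.coeff_diagonal, coeff_coe]
  split_ifs with hn
  · rfl
  · refine (coeff_eq_zero_of_totalDegree_lt ?_).symm
    let i : σ := Classical.arbitrary σ
    calc Q.totalDegree < MvPowerSeries.diagonalExp n i := by
          rw [MvPowerSeries.diagonalExp_apply]; omega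
      _ ≤ _ := Finset.single_le_sum (fun _ _ => Nat.zero_le _)
          (by rw [Finsupp.mem_support_iff, MvPowerSeries.diagonalExp_apply]; omega)

theorem coeff_hilbertSeries {K : Type*} [Field K] {r : ℕ} (a : (Fin r → ℕ) → K)
    (d : Fin r →₀ ℕ) : MvPowerSeries.coeff d (hilbertSeries a) = a d := rfl

theorem Finsupp.exists_eq_single_zero_add_single_one {M : Type*} [AddZeroClass M]
    (d : Fin 2 →₀ M) : ∃ m n, d = single 0 m + single 1 n :=
  ⟨d 0, d 1, by ext i; fin_cases i <;> simp⟩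

open MvPowerSeries in
theorem hilbertSeries_binomSeq_mul :
    hilbertSeries binomSeq *
      (((1 - MvPolynomial.X 0 - MvPolynomial.X 1 : MvPolynomial (Fin 2) ℚ)) :
        MvPowerSeries (Fin 2) ℚ) = 1 := by
  rw [← MvPolynomial.coeToMvPowerSeries.ringHom_apply]
  simp only [map_sub, map_one, MvPolynomial.coeToMvPowerSeries.ringHom_apply, MvPolynomial.coe_X]
  ext d
  obtain ⟨m, n, rfl⟩ := d.exists_eq_single_zero_add_single_one
  rcases m with _ | m <;> rcases n with _ | n <;>
    simp [mul_sub, X_def, coeff_mul_monomial, coeff_one, coeff_hilbertSeries, binomSeq,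
      Finsupp.single_le_iff, -coeff_zero_eq_constantCoeff, Nat.add_right_comm _ 1, ← Nat.add_assoc,
      Nat.choose_succ_succ']

open MvPowerSeries in
theorem hilbertSeries_diagSeq_mul :
    hilbertSeries diagSeq *
      (((1 - MvPolynomial.X 0 * MvPolynomial.X 1 : MvPolynomial (Fin 2) ℚ)) :
        MvPowerSeries (Fin 2) ℚ) = 1 := by
  rw [← MvPolynomial.coeToMvPowerSeries.ringHom_apply]
  simp only [map_sub, map_one, map_mul, MvPolynomial.coeToMvPowerSeries.ringHom_apply,
    MvPolynomial.coe_X]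
  ext d
  obtain ⟨m, n, rfl⟩ := d.exists_eq_single_zero_add_single_one
  rcases m with _ | m <;> rcases n with _ | n <;>
    simp [mul_sub, X_def, monomial_mul_monomial, coeff_mul_monomial, coeff_one,
      coeff_hilbertSeries, diagSeq, Finsupp.le_iff, -coeff_zero_eq_constantCoeff]

theorem isRationalMSeq_of_hilbertSeries_mul_eq_one {K : Type*} [Field K] {r : ℕ}
    {a : (Fin r → ℕ) → K} {Q : MvPolynomial (Fin r) K}
    (h : hilbertSeries a * (Q : MvPowerSeries (Fin r) K) = 1) : IsRationalMSeq a := by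
  refine ⟨1, Q, fun hQ => ?_, by rw [MvPolynomial.coe_one, h]⟩
  have := congrArg MvPowerSeries.constantCoeff h
  rw [map_mul, ← MvPowerSeries.coeff_zero_eq_constantCoeff_apply (Q : MvPowerSeries (Fin r) K),
    MvPolynomial.coeff_coe, hQ, mul_zero, map_one] at this
  exact zero_ne_one this

theorem IsRationalMSeq.exists_diagonal_mul_eq_coe {K : Type*} [Field K] {r : ℕ} [NeZero r]
    {a : (Fin r → ℕ) → K} (ha : ∀ d, a d ≠ 0 → ∃ n, d = fun _ => n) (h : IsRationalMSeq a) :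
    ∃ p q : Polynomial K, q.coeff 0 ≠ 0 ∧
      MvPowerSeries.diagonal (hilbertSeries a) * (q : K⟦X⟧) = p := by
  obtain ⟨P, Q, hQ, hPQ⟩ := h
  obtain ⟨p, hp⟩ := P.exists_coe_eq_diagonal
  obtain ⟨q, hq⟩ := Q.exists_coe_eq_diagonal
  refine ⟨p, q, ?_, ?_⟩
  · rwa [← Polynomial.coeff_coe, hq, MvPowerSeries.coeff_diagonal, MvPowerSeries.diagonalExp_zero,
      MvPolynomial.coeff_coe]
  · rw [hp, hq, ← hPQ, MvPowerSeries.diagonal_mul]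
    intro d hd
    by_contra had
    obtain ⟨n, hn⟩ := ha d had
    exact hd ⟨n, DFunLike.coe_injective hn.symm⟩

theorem binomSeq_mul_diagSeq (n : Fin 2 → ℕ) :
    binomSeq n * diagSeq n = if n 0 = n 1 then ((2 * n 0).choose (n 0) : ℚ) else 0 := by
  by_cases h : n 0 = n 1 <;> simp [binomSeq, diagSeq, h, two_mul]

theorem diagonal_hilbertSeries_binomSeq_mul_diagSeq :
    MvPowerSeries.diagonal (hilbertSeries fun n => binomSeq n * diagSeq n) =
      centralBinomSeries ℚ := by
  ext n
  simp [MvPowerSeries.coeff_diagonal, coeff_hilbertSeries, binomSeq_mul_diagSeq,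
    coeff_centralBinomSeries, Nat.centralBinom_eq_two_mul_choose]

theorem not_isRationalMSeq_binomSeq_mul_diagSeq :
    ¬ IsRationalMSeq fun n => binomSeq n * diagSeq n := by
  intro h
  have hsupp : ∀ d : Fin 2 → ℕ, binomSeq d * diagSeq d ≠ 0 → ∃ n, d = fun _ => n := by
    intro d hd
    have h01 : d 0 = d 1 := by
      by_contra h01
      exact hd (by simp [binomSeq_mul_diagSeq, h01])
    refine ⟨d 0, funext fun i => ?_⟩
    fin_cases i <;> simp [h01]
  obtain ⟨p, q, hq, hpq⟩ := h.exists_diagonal_mul_eq_coe hsupp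
  rw [diagonal_hilbertSeries_binomSeq_mul_diagSeq] at hpq
  exact hq (by rw [eq_zero_of_centralBinomSeries_mul_eq_coe hpq, Polynomial.coeff_zero])

/-- `a(m,n) = binomial (m+n) n` (with `H_a·(1−s−t) = 1`) and the diagonal
indicator `b` (with `H_b·(1−st) = 1`) are rational 2-sequences, their Hadamard product has
Hilbert series `Σ_n binomial (2n) n·sⁿtⁿ`, but the Hadamard product is not rational. -/
theorem hadamard_of_rationals_not_rational :
    hilbertSeries binomSeq *
      (((1 - MvPolynomial.X 0 - MvPolynomial.X 1 : MvPolynomial (Fin 2) ℚ)) :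
        MvPowerSeries (Fin 2) ℚ) = 1 ∧
    hilbertSeries diagSeq *
      (((1 - MvPolynomial.X 0 * MvPolynomial.X 1 : MvPolynomial (Fin 2) ℚ)) :
        MvPowerSeries (Fin 2) ℚ) = 1 ∧
    IsRationalMSeq binomSeq ∧ IsRationalMSeq diagSeq ∧
    (∀ n : Fin 2 → ℕ, binomSeq n * diagSeq n =
      if n 0 = n 1 then ((2 * n 0).choose (n 0) : ℚ) else 0) ∧
    ¬ IsRationalMSeq (fun n => binomSeq n * diagSeq n) :=
  ⟨hilbertSeries_binomSeq_mul, hilbertSeries_diagSeq_mul,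
    isRationalMSeq_of_hilbertSeries_mul_eq_one hilbertSeries_binomSeq_mul,
    isRationalMSeq_of_hilbertSeries_mul_eq_one hilbertSeries_diagSeq_mul,
    binomSeq_mul_diagSeq, not_isRationalMSeq_binomSeq_mul_diagSeq⟩
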